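/- arXiv:2605.28150 — 4 statements merged into one kernel-verified Lean document; each statement's English description precedes it below -/
import Mathlib

section
/- For any fixed a ∈ ℝ, the function τ ↦ (1/τ)·W₀(τ·e^a) is strictly decreasing on (0, ∞). -/
/-- For fixed `a ∈ ℝ`, `τ ↦ (1/τ) * W₀ (τ * exp a)` is strictly decreasing on `(0, ∞)`. -/
theorem lambert_ratio_strictAnti
    (W : ℝ → ℝ)
    (hW : ∀ z : ℝ, 0 ≤ z → 0 ≤ W z ∧ W z * Real.exp (W z) = z)
    (a : ℝ) :
    StrictAntiOn (fun τ : ℝ => (1 / τ) * W (τ * Real.exp a)) (Set.Ioi (0 : ℝ)) := by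
  intro x hx y hy hxy
  simp only [Set.mem_Ioi] at hx hy
  have ea := Real.exp_pos a
  obtain ⟨hu0, hu⟩ := hW (x * Real.exp a) (by positivity)
  obtain ⟨hv0, hv⟩ := hW (y * Real.exp a) (by positivity)
  set u := W (x * Real.exp a) with hud
  set v := W (y * Real.exp a) with hvd
  have huv : u < v := by
    by_contra h
    push_neg at h
    have hev : Real.exp v ≤ Real.exp u := Real.exp_le_exp.2 h
    have : y * Real.exp a ≤ x * Real.exp a := by
      rw [← hu, ← hv]
      nlinarith [Real.exp_pos v, Real.exp_pos u]
    nlinarith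
  have hx' : (1/x) * u = Real.exp a / Real.exp u := by
    rw [eq_div_iff (Real.exp_pos u).ne']
    field_simp
    nlinarith
  have hy' : (1/y) * v = Real.exp a / Real.exp v := by
    rw [eq_div_iff (Real.exp_pos v).ne']
    field_simp
    nlinarith
  show (1/y) * v < (1/x) * u
  rw [hx', hy']
  exact div_lt_div_of_pos_left ea (Real.exp_pos u) (Real.exp_lt_exp.2 huv)
end

section
/- Let μ be a probability measure on a finite set Y, A : Y → ℝ, β > 0, and M(τ) = E_{y∼μ}[(1/τ)·W₀(τ·exp(A(y)/β))]. Suppose τ_s > 0 satisfies M(τ_s) = 1. If E_{y∼μ}[A(y)] ≥ β, then τ_s ≥ 1. -/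
/-- If `M τ_s = 1` with `τ_s > 0` and `E_{μ}[A] ≥ β`, then `τ_s ≥ 1`. -/
theorem lambert_multiplier_ge_one
    {Y : Type*} [Fintype Y]
    (W : ℝ → ℝ)
    (hW : ∀ z : ℝ, 0 ≤ z → 0 ≤ W z ∧ W z * Real.exp (W z) = z)
    (μ : Y → ℝ) (hμ0 : ∀ y, 0 ≤ μ y) (hμ1 : ∑ y, μ y = 1)
    (A : Y → ℝ) (β : ℝ) (hβ : 0 < β)
    (M : ℝ → ℝ)
    (hM : ∀ τ : ℝ, M τ = ∑ y, μ y * ((1 / τ) * W (τ * Real.exp (A y / β))))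
    (τs : ℝ) (hτs : 0 < τs) (hMτs : M τs = 1)
    (hA : β ≤ ∑ y, μ y * A y) :
    1 ≤ τs := by
  set w : Y → ℝ := fun y => W (τs * Real.exp (A y / β)) with hwdef
  have hz : ∀ y, 0 < τs * Real.exp (A y / β) := fun y => mul_pos hτs (Real.exp_pos _)
  have hweq : ∀ y, w y * Real.exp (w y) = τs * Real.exp (A y / β) :=
    fun y => (hW _ (hz y).le).2
  have hw0 : ∀ y, 0 < w y := by
    intro y
    rcases ((hW _ (hz y).le).1).lt_or_eq with h | h
    · exact h
    · exfalso
      have h2 := hweq y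
      have hwy : w y = 0 := h.symm
      rw [hwy] at h2
      simp at h2
      nlinarith [hz y]
  -- A y in terms of w y
  have hAeq : ∀ y, A y = β * (w y + Real.log (w y) - Real.log τs) := by
    intro y
    have h := hweq y
    have hl : Real.log (w y * Real.exp (w y)) = Real.log (τs * Real.exp (A y / β)) := by
      rw [h]
    rw [Real.log_mul (hw0 y).ne' (Real.exp_pos _).ne',
        Real.log_mul hτs.ne' (Real.exp_pos _).ne',
        Real.log_exp, Real.log_exp] at hl
    have hdiv : A y / β = w y + Real.log (w y) - Real.log τs := by linarith
    rw [div_eq_iff hβ.ne'] at hdiv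
    rw [hdiv]; ring
  -- sum identity
  have hsum : ∑ y, μ y * w y = τs := by
    have h := hMτs
    rw [hM] at h
    have h' : ∑ y, μ y * (1 / τs * w y) = 1 := h
    have h2 : ∑ y, μ y * (1 / τs * w y) = (1 / τs) * ∑ y, μ y * w y := by
      rw [Finset.mul_sum]
      exact Finset.sum_congr rfl fun y _ => by ring
    rw [h2] at h'
    field_simp at h'
    linarith
  -- Jensen for log
  have hjensen : ∑ y, μ y * Real.log (w y) ≤ Real.log τs := by
    have hc : ConcaveOn ℝ (Set.Ioi (0:ℝ)) Real.log := strictConcaveOn_log_Ioi.concaveOn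
    have := hc.le_map_sum (t := Finset.univ) (w := μ) (p := w)
      (fun y _ => hμ0 y) hμ1 (fun y _ => hw0 y)
    simpa [smul_eq_mul, hsum] using this
  -- combine
  have hAsum : ∑ y, μ y * A y = β * (τs + (∑ y, μ y * Real.log (w y)) - Real.log τs) := by
    have : ∑ y, μ y * A y = ∑ y, μ y * (β * (w y + Real.log (w y) - Real.log τs)) :=
      Finset.sum_congr rfl (fun y _ => by rw [hAeq y])
    rw [this]
    have expand : ∀ y, μ y * (β * (w y + Real.log (w y) - Real.log τs))
        = β * (μ y * w y) + β * (μ y * Real.log (w y)) - β * (μ y * Real.log τs) := by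
      intro y; ring
    simp_rw [expand]
    rw [Finset.sum_sub_distrib, Finset.sum_add_distrib, ← Finset.mul_sum, ← Finset.mul_sum,
        ← Finset.mul_sum, hsum, ← Finset.sum_mul, hμ1]
    ring
  rw [hAsum] at hA
  nlinarith [hjensen, hβ]
end

section
/- Let r₁, …, r_G be real numbers with G ≥ 1, let β > 0, let r̄ = (1/G)·Σᵢ rᵢ, and set Âᵢ = rᵢ − r̄ + β. Then (1/G)·Σᵢ W₀(exp(Âᵢ/β)) ≥ 1. -/
/-!
The map `u ↦ W₀(eᵘ)` is convex with tangent line `(u + 1) / 2` at `u = 1`: writing `w = W₀(eᵘ)`,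
we have `log w + w = u`, and `log w ≤ w - 1` gives `(u + 1) / 2 ≤ w`. The numbers `Âᵢ / β` have
mean `1`, so averaging this tangent bound over `i` yields the claim.
-/

open Finset Real

lemma add_one_div_two_le_of_mul_exp_eq_exp {w u : ℝ} (h : w * exp w = exp u) :
    (u + 1) / 2 ≤ w := by
  have hw : 0 < w := pos_of_mul_pos_left (h ▸ exp_pos u) (exp_pos w).le
  have hlog : log w + w = u := by
    simpa [log_mul hw.ne' (exp_pos w).ne'] using congrArg log h
  linarith [log_le_sub_one_of_pos hw]

lemma sum_sub_mean_add {ι : Type*} [Fintype ι] (r : ι → ℝ) (c : ℝ) :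
    ∑ i, (r i - 1 / (Fintype.card ι : ℝ) * ∑ j, r j + c) = Fintype.card ι * c := by
  rw [sum_add_distrib, sum_sub_distrib, sum_const, sum_const, card_univ, nsmul_eq_mul,
    nsmul_eq_mul, ← mul_assoc, mul_one_div]
  rcases eq_or_ne (Fintype.card ι : ℝ) 0 with h | h
  · simp [Fintype.card_eq_zero_iff.mp (by exact_mod_cast h)]
  · rw [div_self h]; ring

/-- For rewards `r₁,…,r_G`, `β > 0`, `r̄` the group mean, and `Âᵢ = rᵢ − r̄ + β`,
we have `(1/G) Σᵢ W₀(exp(Âᵢ/β)) ≥ 1`. -/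
theorem shifted_mean_advantage_lambert_mass
    (W : ℝ → ℝ)
    (hW : ∀ z : ℝ, 0 ≤ z → 0 ≤ W z ∧ W z * Real.exp (W z) = z)
    (G : ℕ) (hG : 1 ≤ G) (r : Fin G → ℝ) (β : ℝ) (hβ : 0 < β)
    (rbar : ℝ) (hrbar : rbar = (1 / (G : ℝ)) * ∑ i, r i)
    (A : Fin G → ℝ) (hA : ∀ i, A i = r i - rbar + β) :
    1 ≤ (1 / (G : ℝ)) * ∑ i, W (Real.exp (A i / β)) := by
  have hGpos : (0 : ℝ) < G := by exact_mod_cast hG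
  have hsumA : ∑ i, A i = G * β := by
    simpa [hA, hrbar] using sum_sub_mean_add r β
  have hsum : (G : ℝ) ≤ ∑ i, W (exp (A i / β)) := calc
    (G : ℝ) = ∑ i, (A i / β + 1) / 2 := by
      rw [← sum_div, sum_add_distrib, ← sum_div, hsumA]
      simp only [sum_const, card_univ, Fintype.card_fin, nsmul_eq_mul]
      field_simp
      ring
    _ ≤ ∑ i, W (exp (A i / β)) := sum_le_sum fun i _ ↦
      add_one_div_two_le_of_mul_exp_eq_exp (hW _ (exp_pos _).le).2
  rwa [one_div, le_inv_mul_iff₀ hGpos, mul_one]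
end

section
/- Let Y be a finite set, μ a probability measure on Y, r : Y → ℝ, and β > 0. Draw i.i.d. samples y₁, …, y_G from μ and set Âᵢ = rᵢ − β·log((1/G)·Σⱼ exp(rⱼ/β)) where rⱼ = r(yⱼ). Define A(y) = E[Â₁ | y₁ = y]. Then E_{y∼μ}[exp(A(y)/β)] ≤ 1. -/
/-- Let `y₁,…,y_G` be i.i.d. from `μ` on a finite set, with
`Âᵢ = r(yᵢ) − β log((1/G) Σⱼ exp(r(yⱼ)/β))`, and let
`A y = E[Â₁ ∣ y₁ = y]` (the expectation over the remaining `G−1` i.i.d. samples).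
Then `E_{y∼μ}[exp(A y / β)] ≤ 1`. -/
theorem lse_population_advantage_subnormalized
    {Y : Type*} [Fintype Y]
    (μ : Y → ℝ) (hμ0 : ∀ y, 0 ≤ μ y) (hμ1 : ∑ y, μ y = 1)
    (r : Y → ℝ) (β : ℝ) (hβ : 0 < β)
    (G : ℕ) (hG : 1 ≤ G)
    (A : Y → ℝ)
    (hA : ∀ y, A y =
      ∑ t : Fin (G - 1) → Y, (∏ j, μ (t j)) *
        (r y - β * Real.log
          ((1 / (G : ℝ)) * (Real.exp (r y / β) + ∑ j, Real.exp (r (t j) / β))))) :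
    ∑ y, μ y * Real.exp (A y / β) ≤ 1 := by
  classical
  obtain ⟨k, rfl⟩ : ∃ k, G = k + 1 := ⟨G - 1, by omega⟩
  have hA' : ∀ y, A y =
      ∑ t : Fin k → Y, (∏ j, μ (t j)) *
        (r y - β * Real.log
          ((1 / ((k : ℝ) + 1)) * (Real.exp (r y / β) + ∑ j, Real.exp (r (t j) / β)))) := by
    intro y
    have := hA y
    push_cast at this
    exact this
  clear hA
  set e : Y → ℝ := fun y => Real.exp (r y / β) with he
  have he0 : ∀ y, 0 < e y := fun y => Real.exp_pos _
  set w : (Fin k → Y) → ℝ := fun t => ∏ j, μ (t j) with hw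
  have hw0 : ∀ t, 0 ≤ w t := fun t => Finset.prod_nonneg fun j _ => hμ0 _
  have hw1 : ∑ t : Fin k → Y, w t = 1 := by
    simp only [hw, ← Fintype.prod_sum]
    simp [hμ1]
  set W : (Fin (k+1) → Y) → ℝ := fun s => ∏ j, μ (s j) with hW
  have hW1 : ∑ s : Fin (k+1) → Y, W s = 1 := by
    simp only [hW, ← Fintype.prod_sum]
    simp [hμ1]
  set X : (Fin (k+1) → Y) → ℝ := fun s => (1 / ((k:ℝ)+1)) * ∑ j, e (s j) with hX
  have hX0 : ∀ s, 0 < X s := fun s => by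
    apply mul_pos (by positivity)
    exact Finset.sum_pos (fun j _ => he0 _) ⟨0, Finset.mem_univ _⟩
  set F : Fin (k+1) → ℝ := fun i => ∑ s : Fin (k+1) → Y, W s * (e (s i) / X s) with hF
  have hFsym : ∀ i, F i = F 0 := by
    intro i
    let σ : (Fin (k+1) → Y) ≃ (Fin (k+1) → Y) :=
      { toFun := fun s => s ∘ Equiv.swap 0 i
        invFun := fun s => s ∘ Equiv.swap 0 i
        left_inv := fun s => by funext j; simp [Function.comp]
        right_inv := fun s => by funext j; simp [Function.comp] }
    refine (Fintype.sum_equiv σ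
      (fun s => W s * (e (s 0) / X s))
      (fun s => W s * (e (s i) / X s)) fun s => ?_).symm
    have hWs : W (s ∘ Equiv.swap 0 i) = W s := by
      simp only [hW, Function.comp]
      exact Equiv.prod_comp (Equiv.swap 0 i) (fun j => μ (s j))
    have hXs : X (s ∘ Equiv.swap 0 i) = X s := by
      simp only [hX, Function.comp]
      congr 1
      exact Equiv.sum_comp (Equiv.swap 0 i) (fun j => e (s j))
    show W s * (e (s 0) / X s) = W (s ∘ Equiv.swap 0 i) * (e ((s ∘ Equiv.swap 0 i) i) / X (s ∘ Equiv.swap 0 i))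
    rw [hWs, hXs]
    congr 2
    simp [Function.comp]
  have hFval : F 0 = 1 := by
    have hsum : ∑ i : Fin (k+1), F i = (k:ℝ)+1 := by
      simp only [hF]
      rw [Finset.sum_comm]
      have key : ∀ s : Fin (k+1) → Y, ∑ i : Fin (k+1), W s * (e (s i) / X s)
          = W s * ((k:ℝ)+1) := by
        intro s
        rw [← Finset.mul_sum, ← Finset.sum_div]
        congr 1
        rw [div_eq_iff (ne_of_gt (hX0 s))]
        simp only [hX]
        have hk : ((k:ℝ)+1) ≠ 0 := by positivity
        field_simp
      simp only [key, ← Finset.sum_mul, hW1, one_mul]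
    have hconst : ∑ i : Fin (k+1), F i = ((k:ℝ)+1) * F 0 := by
      rw [Finset.sum_congr rfl fun i _ => hFsym i, Finset.sum_const]
      simp only [Finset.card_univ, Fintype.card_fin, nsmul_eq_mul]
      push_cast
      ring
    have hk : ((k:ℝ)+1) ≠ 0 := by positivity
    have : ((k:ℝ)+1) * F 0 = ((k:ℝ)+1) * 1 := by rw [← hconst, hsum, mul_one]
    exact mul_left_cancel₀ hk this
  have hJ : ∀ y, Real.exp (A y / β) ≤
      ∑ t : Fin k → Y, w t * (e y / X (Fin.cons y t)) := by
    intro y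
    have hAy : A y / β = ∑ t : Fin k → Y, w t • (r y / β - Real.log (X (Fin.cons y t))) := by
      rw [hA' y, Finset.sum_div]
      refine Finset.sum_congr rfl fun t _ => ?_
      have hXc : X (Fin.cons y t) = (1 / ((k:ℝ)+1)) * (e y + ∑ j, e (t j)) := by
        simp only [hX, Fin.sum_univ_succ, Fin.cons_zero, Fin.cons_succ]
      rw [hXc, smul_eq_mul, hw, he]
      field_simp
    rw [hAy]
    calc Real.exp (∑ t : Fin k → Y, w t • (r y / β - Real.log (X (Fin.cons y t))))
        ≤ ∑ t : Fin k → Y, w t • Real.exp (r y / β - Real.log (X (Fin.cons y t))) :=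
          convexOn_exp.map_sum_le (fun t _ => hw0 t) hw1 (fun t _ => trivial)
      _ = ∑ t : Fin k → Y, w t * (e y / X (Fin.cons y t)) := by
          refine Finset.sum_congr rfl fun t _ => ?_
          rw [smul_eq_mul, Real.exp_sub, Real.exp_log (hX0 _)]
  calc ∑ y, μ y * Real.exp (A y / β)
      ≤ ∑ y, μ y * ∑ t : Fin k → Y, w t * (e y / X (Fin.cons y t)) :=
        Finset.sum_le_sum fun y _ => mul_le_mul_of_nonneg_left (hJ y) (hμ0 y)
    _ = F 0 := by
        simp only [hF]
        rw [← (Fin.consEquiv (fun _ : Fin (k+1) => Y)).sum_comp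
          (fun s => W s * (e (s 0) / X s))]
        rw [Fintype.sum_prod_type]
        refine Finset.sum_congr rfl fun y _ => ?_
        rw [Finset.mul_sum]
        refine Finset.sum_congr rfl fun t _ => ?_
        simp only [Fin.consEquiv_apply, hW, hX, Fin.prod_univ_succ, Fin.sum_univ_succ,
          Fin.cons_zero, Fin.cons_succ]
        ring
    _ = 1 := hFval
end
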